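/- arXiv:1712.06013 — 6 statements merged into one kernel-verified Lean document; each statement's English description precedes it below -/
import Mathlib

section
/- Let I_i, I_j ⊆ Fin n be index sets, assume X is nonempty, and let X_i be a partition of π_{I_i}(X) and X_j a partition of π_{I_j}(X). Then the composition X_i ⋒ X_j is a partition of π_{I_i ∪ I_j}(X): its elements are nonempty, pairwise disjoint, and their union equals π_{I_i ∪ I_j}(X). -/
/-- Projection of a state `x : Fin d → ℝ` onto the index set `I`. -/
def proj {d : ℕ} (I : Set (Fin d)) (x : Fin d → ℝ) : ↥I → ℝ := fun l => x l.1

/-- Elementwise projection of a set of states onto the index set `I`. -/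
def projSet {d : ℕ} (I : Set (Fin d)) (S : Set (Fin d → ℝ)) : Set (↥I → ℝ) :=
  proj I '' S

/-- Restriction of a partial state defined on `K` to a subset `I ⊆ K`. -/
def res {d : ℕ} {I K : Set (Fin d)} (h : I ⊆ K) (f : ↥K → ℝ) : ↥I → ℝ :=
  fun l => f ⟨l.1, h l.2⟩

/-- Elementwise restriction of a set of partial states on `K` to `I ⊆ K`. -/
def resSet {d : ℕ} {I K : Set (Fin d)} (h : I ⊆ K) (S : Set (↥K → ℝ)) : Set (↥I → ℝ) :=
  res h '' S

/-- `𝒮` is a partition of `A`: nonempty, pairwise disjoint sets whose union is `A`. -/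
def IsPartition {α : Type*} (𝒮 : Set (Set α)) (A : Set α) : Prop :=
  (∀ s ∈ 𝒮, s.Nonempty) ∧ (𝒮.Pairwise fun s t => Disjoint s t) ∧ ⋃₀ 𝒮 = A

/-- The preliminary composition `C₀(Xi, Xj)`. -/
def C0 {n : ℕ} (X : Set (Fin n → ℝ)) (Ii Ij : Set (Fin n))
    (Xi : Set (Set (↥Ii → ℝ))) (Xj : Set (Set (↥Ij → ℝ))) :
    Set (Set (↥(Ii ∪ Ij) → ℝ)) :=
  { s | s ⊆ projSet (Ii ∪ Ij) X ∧
        (∃ t ∈ Xi, resSet Set.subset_union_left s ⊆ t) ∧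
        (∃ t' ∈ Xj, resSet Set.subset_union_right s ⊆ t') }

/-- The composition `Xi ⋒ Xj`: the maximal elements of `C₀(Xi, Xj)`. -/
def Comp {n : ℕ} (X : Set (Fin n → ℝ)) (Ii Ij : Set (Fin n))
    (Xi : Set (Set (↥Ii → ℝ))) (Xj : Set (Set (↥Ij → ℝ))) :
    Set (Set (↥(Ii ∪ Ij) → ℝ)) :=
  { s ∈ C0 X Ii Ij Xi Xj | ¬ ∃ s' ∈ C0 X Ii Ij Xi Xj, s ⊂ s' }

/-- if `X` is nonempty and `Xi`, `Xj` are partitions of `π_{Ii}(X)` and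
`π_{Ij}(X)`, then the composition `Xi ⋒ Xj` is a partition of `π_{Ii ∪ Ij}(X)`. -/
theorem Comp_isPartition {n : ℕ} (X : Set (Fin n → ℝ)) (hX : X.Nonempty)
    (Ii Ij : Set (Fin n))
    (Xi : Set (Set (↥Ii → ℝ))) (Xj : Set (Set (↥Ij → ℝ)))
    (hXi : IsPartition Xi (projSet Ii X)) (hXj : IsPartition Xj (projSet Ij X)) :
    IsPartition (Comp X Ii Ij Xi Xj) (projSet (Ii ∪ Ij) X) := by
  obtain ⟨hne_i, hdisj_i, hun_i⟩ := hXi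
  obtain ⟨hne_j, hdisj_j, hun_j⟩ := hXj
  -- restrictions of members of the big projection land in the small projections
  have hres_i : ∀ x ∈ projSet (Ii ∪ Ij) X,
      res (Set.subset_union_left) x ∈ projSet Ii X := by
    rintro x ⟨y, hy, rfl⟩; exact ⟨y, hy, rfl⟩
  have hres_j : ∀ x ∈ projSet (Ii ∪ Ij) X,
      res (Set.subset_union_right) x ∈ projSet Ij X := by
    rintro x ⟨y, hy, rfl⟩; exact ⟨y, hy, rfl⟩
  have hclass_i : ∀ x ∈ projSet (Ii ∪ Ij) X, ∃ t ∈ Xi,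
      res (Set.subset_union_left) x ∈ t := by
    intro x hx
    have h := hres_i x hx
    rw [← hun_i] at h
    obtain ⟨t, ht, hxt⟩ := h
    exact ⟨t, ht, hxt⟩
  have hclass_j : ∀ x ∈ projSet (Ii ∪ Ij) X, ∃ t ∈ Xj,
      res (Set.subset_union_right) x ∈ t := by
    intro x hx
    have h := hres_j x hx
    rw [← hun_j] at h
    obtain ⟨t, ht, hxt⟩ := h
    exact ⟨t, ht, hxt⟩
  -- uniqueness of classes
  have huniq_i : ∀ t ∈ Xi, ∀ u ∈ Xi, ∀ a, a ∈ t → a ∈ u → t = u := by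
    intro t ht u hu a hat hau
    by_contra hne
    exact Set.disjoint_left.mp (hdisj_i ht hu hne) hat hau
  have huniq_j : ∀ t ∈ Xj, ∀ u ∈ Xj, ∀ a, a ∈ t → a ∈ u → t = u := by
    intro t ht u hu a hat hau
    by_contra hne
    exact Set.disjoint_left.mp (hdisj_j ht hu hne) hat hau
  -- the candidate maximal sets
  set S : Set (↥Ii → ℝ) → Set (↥Ij → ℝ) → Set (↥(Ii ∪ Ij) → ℝ) :=
    fun t t' => { y | y ∈ projSet (Ii ∪ Ij) X ∧
      res (Set.subset_union_left) y ∈ t ∧ res (Set.subset_union_right) y ∈ t' }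
    with hS
  have hSC0 : ∀ t ∈ Xi, ∀ t' ∈ Xj, S t t' ∈ C0 X Ii Ij Xi Xj := by
    intro t ht t' ht'
    refine ⟨fun y hy => hy.1, ⟨t, ht, ?_⟩, ⟨t', ht', ?_⟩⟩
    · rintro _ ⟨z, hz, rfl⟩; exact hz.2.1
    · rintro _ ⟨z, hz, rfl⟩; exact hz.2.2
  have hSmax : ∀ t ∈ Xi, ∀ t' ∈ Xj, ∀ x, x ∈ S t t' →
      S t t' ∈ Comp X Ii Ij Xi Xj := by
    intro t ht t' ht' x hx
    refine ⟨hSC0 t ht t' ht', ?_⟩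
    rintro ⟨s', ⟨hs'sub, ⟨u, hu, hru⟩, ⟨u', hu', hru'⟩⟩, hss⟩
    have hxs' : x ∈ s' := hss.1 hx
    have hxu : res (Set.subset_union_left) x ∈ u := hru ⟨x, hxs', rfl⟩
    have hxu' : res (Set.subset_union_right) x ∈ u' := hru' ⟨x, hxs', rfl⟩
    have htu : t = u := huniq_i t ht u hu _ hx.2.1 hxu
    have htu' : t' = u' := huniq_j t' ht' u' hu' _ hx.2.2 hxu'
    apply hss.2
    intro y hy
    exact ⟨hs'sub hy, htu ▸ hru ⟨y, hy, rfl⟩, htu' ▸ hru' ⟨y, hy, rfl⟩⟩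
  constructor
  · -- nonempty
    intro s hs
    rcases Set.eq_empty_or_nonempty s with rfl | h
    · exfalso
      obtain ⟨x0, hx0⟩ := hX
      have hx : proj (Ii ∪ Ij) x0 ∈ projSet (Ii ∪ Ij) X := ⟨x0, hx0, rfl⟩
      obtain ⟨t, ht, hxt⟩ := hclass_i _ hx
      obtain ⟨t', ht', hxt'⟩ := hclass_j _ hx
      apply hs.2
      refine ⟨{proj (Ii ∪ Ij) x0}, ⟨?_, ⟨t, ht, ?_⟩, ⟨t', ht', ?_⟩⟩, ?_⟩
      · simpa using hx
      · rintro _ ⟨z, hz, rfl⟩; rw [Set.mem_singleton_iff] at hz; subst hz; exact hxt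
      · rintro _ ⟨z, hz, rfl⟩; rw [Set.mem_singleton_iff] at hz; subst hz; exact hxt'
      · exact Set.empty_ssubset.mpr ⟨_, rfl⟩
    · exact h
  constructor
  · -- pairwise disjoint
    intro s hs s' hs' hne
    rw [Set.disjoint_left]
    intro x hxs hxs'
    obtain ⟨⟨hssub, ⟨t, ht, hrt⟩, ⟨t', ht', hrt'⟩⟩, hsmax⟩ := hs
    obtain ⟨⟨hssub', ⟨u, hu, hru⟩, ⟨u', hu', hru'⟩⟩, hsmax'⟩ := hs'
    have htu : t = u := huniq_i t ht u hu _ (hrt ⟨x, hxs, rfl⟩) (hru ⟨x, hxs', rfl⟩)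
    have htu' : t' = u' := huniq_j t' ht' u' hu' _ (hrt' ⟨x, hxs, rfl⟩) (hru' ⟨x, hxs', rfl⟩)
    have hunion : s ∪ s' ∈ C0 X Ii Ij Xi Xj := by
      refine ⟨Set.union_subset hssub hssub', ⟨t, ht, ?_⟩, ⟨t', ht', ?_⟩⟩
      · rintro _ ⟨z, hz, rfl⟩
        cases hz with
        | inl h => exact hrt ⟨z, h, rfl⟩
        | inr h => exact htu ▸ hru ⟨z, h, rfl⟩
      · rintro _ ⟨z, hz, rfl⟩
        cases hz with
        | inl h => exact hrt' ⟨z, h, rfl⟩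
        | inr h => exact htu' ▸ hru' ⟨z, h, rfl⟩
    have h1 : s = s ∪ s' := by
      by_contra hne2
      exact hsmax ⟨s ∪ s', hunion, ⟨Set.subset_union_left, fun h => hne2
        (Set.Subset.antisymm Set.subset_union_left h)⟩⟩
    have h2 : s' = s ∪ s' := by
      by_contra hne2
      exact hsmax' ⟨s ∪ s', hunion, ⟨Set.subset_union_right, fun h => hne2
        (Set.Subset.antisymm Set.subset_union_right h)⟩⟩
    exact hne (h1.trans h2.symm)
  · -- union
    apply Set.Subset.antisymm
    · intro x hx
      obtain ⟨s, hs, hxs⟩ := hx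
      exact hs.1.1 hxs
    · intro x hx
      obtain ⟨t, ht, hxt⟩ := hclass_i _ hx
      obtain ⟨t', ht', hxt'⟩ := hclass_j _ hx
      have hxS : x ∈ S t t' := ⟨hx, hxt, hxt'⟩
      exact ⟨S t t', hSmax t ht t' ht' x hxS, hxS⟩
end

section
/- Let I_i, I_j ⊆ Fin n be index sets, and let X_i be a partition of π_{I_i}(X) and X_j a partition of π_{I_j}(X). If s, s' ∈ C₀(X_i, X_j) and s ∩ s' ≠ ∅, then s ∪ s' ∈ C₀(X_i, X_j). -/
/-- if `s, s' ∈ C₀(Xi, Xj)` intersect, then their union is in `C₀(Xi, Xj)`. -/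
theorem C0_union_mem {n : ℕ} (X : Set (Fin n → ℝ)) (Ii Ij : Set (Fin n))
    (Xi : Set (Set (↥Ii → ℝ))) (Xj : Set (Set (↥Ij → ℝ)))
    (hXi : IsPartition Xi (projSet Ii X)) (hXj : IsPartition Xj (projSet Ij X))
    (s s' : Set (↥(Ii ∪ Ij) → ℝ))
    (hs : s ∈ C0 X Ii Ij Xi Xj) (hs' : s' ∈ C0 X Ii Ij Xi Xj)
    (hne : (s ∩ s').Nonempty) :
    s ∪ s' ∈ C0 X Ii Ij Xi Xj := by
  obtain ⟨hsub, ⟨t, ht, hst⟩, ⟨u, hu, hsu⟩⟩ := hs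
  obtain ⟨hsub', ⟨t', ht', hst'⟩, ⟨u', hu', hsu'⟩⟩ := hs'
  obtain ⟨x, hxs, hxs'⟩ := hne
  have hti : t = t' := by
    by_contra hne'
    have hd := hXi.2.1 ht ht' hne'
    exact (hd.le_bot ⟨hst ⟨x, hxs, rfl⟩, hst' ⟨x, hxs', rfl⟩⟩ : _)
  have huj : u = u' := by
    by_contra hne'
    have hd := hXj.2.1 hu hu' hne'
    exact (hd.le_bot ⟨hsu ⟨x, hxs, rfl⟩, hsu' ⟨x, hxs', rfl⟩⟩ : _)
  refine ⟨Set.union_subset hsub hsub', ⟨t, ht, ?_⟩, ⟨u, hu, ?_⟩⟩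
  · rintro y ⟨z, hz | hz, rfl⟩
    · exact hst ⟨z, hz, rfl⟩
    · exact hti ▸ hst' ⟨z, hz, rfl⟩
  · rintro y ⟨z, hz | hz, rfl⟩
    · exact hsu ⟨z, hz, rfl⟩
    · exact huj ▸ hsu' ⟨z, hz, rfl⟩
end

section
/- Assume X = Set.univ.pi A for a family A : Fin n → Set ℝ with every A l nonempty. Let I_i, I_j ⊆ Fin n be disjoint index sets (I_i ∩ I_j = ∅), and let X_i be a partition of π_{I_i}(X) and X_j a partition of π_{I_j}(X). Then the composition X_i ⋒ X_j consists exactly of the 'rectangles': X_i ⋒ X_j = { R(s_i, s_j) | s_i ∈ X_i, s_j ∈ X_j }, where R(s_i, s_j) := { x ∈ π_{I_i ∪ I_j}(X) | π_{I_i}(x) ∈ s_i ∧ π_{I_j}(x) ∈ s_j }. (This is the Cartesian-product form of the composition on disjoint index sets.) -/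
lemma exists_combine {n : ℕ} (A : Fin n → Set ℝ)
    (X : Set (Fin n → ℝ)) (hX : X = Set.univ.pi A)
    (Ii Ij : Set (Fin n)) (hdisj : Ii ∩ Ij = ∅)
    {yi : ↥Ii → ℝ} {yj : ↥Ij → ℝ}
    (hyi : yi ∈ projSet Ii X) (hyj : yj ∈ projSet Ij X) :
    ∃ x ∈ projSet (Ii ∪ Ij) X,
      res Set.subset_union_left x = yi ∧ res Set.subset_union_right x = yj := by
  obtain ⟨x1, hx1, rfl⟩ := hyi
  obtain ⟨x2, hx2, rfl⟩ := hyj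
  classical
  set x : Fin n → ℝ := fun l => if l ∈ Ii then x1 l else x2 l with hxdef
  have hxX : x ∈ X := by
    subst hX
    intro l _
    by_cases h : l ∈ Ii
    · simpa [hxdef, h] using hx1 l trivial
    · simpa [hxdef, h] using hx2 l trivial
  refine ⟨proj (Ii ∪ Ij) x, ⟨x, hxX, rfl⟩, ?_, ?_⟩
  · funext l
    simp [res, proj, hxdef, l.2]
  · funext l
    have hni : l.1 ∉ Ii := fun h => by
      have : l.1 ∈ Ii ∩ Ij := ⟨h, l.2⟩
      simp [hdisj] at this
    simp [res, proj, hxdef, hni]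

/-- when `X` is a nonempty box and `Ii, Ij` are disjoint, the composition
`Xi ⋒ Xj` consists exactly of the rectangles `R(si, sj)`. -/
theorem Comp_eq_rectangles {n : ℕ} (A : Fin n → Set ℝ) (hA : ∀ l, (A l).Nonempty)
    (X : Set (Fin n → ℝ)) (hX : X = Set.univ.pi A)
    (Ii Ij : Set (Fin n)) (hdisj : Ii ∩ Ij = ∅)
    (Xi : Set (Set (↥Ii → ℝ))) (Xj : Set (Set (↥Ij → ℝ)))
    (hXi : IsPartition Xi (projSet Ii X)) (hXj : IsPartition Xj (projSet Ij X)) :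
    Comp X Ii Ij Xi Xj =
      { R | ∃ si ∈ Xi, ∃ sj ∈ Xj,
          R = { x ∈ projSet (Ii ∪ Ij) X |
                res Set.subset_union_left x ∈ si ∧ res Set.subset_union_right x ∈ sj } } := by
  classical
  ext s
  constructor
  · rintro ⟨⟨hsub, ⟨si, hsi, hresi⟩, ⟨sj, hsj, hresj⟩⟩, hmax⟩
    refine ⟨si, hsi, sj, hsj, ?_⟩
    set R : Set (↥(Ii ∪ Ij) → ℝ) :=
      { x ∈ projSet (Ii ∪ Ij) X |
        res Set.subset_union_left x ∈ si ∧ res Set.subset_union_right x ∈ sj } with hR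
    have hsR : s ⊆ R := fun x hx =>
      ⟨hsub hx, hresi ⟨x, hx, rfl⟩, hresj ⟨x, hx, rfl⟩⟩
    have hRC0 : R ∈ C0 X Ii Ij Xi Xj := by
      refine ⟨Set.sep_subset _ _, ⟨si, hsi, ?_⟩, ⟨sj, hsj, ?_⟩⟩
      · rintro _ ⟨x, hx, rfl⟩; exact hx.2.1
      · rintro _ ⟨x, hx, rfl⟩; exact hx.2.2
    by_contra hne
    exact hmax ⟨R, hRC0, hsR.ssubset_of_ne hne⟩
  · rintro ⟨si, hsi, sj, hsj, rfl⟩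
    set R : Set (↥(Ii ∪ Ij) → ℝ) :=
      { x ∈ projSet (Ii ∪ Ij) X |
        res Set.subset_union_left x ∈ si ∧ res Set.subset_union_right x ∈ sj } with hR
    have hRC0 : R ∈ C0 X Ii Ij Xi Xj := by
      refine ⟨Set.sep_subset _ _, ⟨si, hsi, ?_⟩, ⟨sj, hsj, ?_⟩⟩
      · rintro _ ⟨x, hx, rfl⟩; exact hx.2.1
      · rintro _ ⟨x, hx, rfl⟩; exact hx.2.2
    refine ⟨hRC0, ?_⟩
    rintro ⟨s', ⟨hsub', ⟨t, ht, hrt⟩, ⟨t', ht', hrt'⟩⟩, hss⟩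
    -- R is nonempty
    obtain ⟨yi, hyi⟩ := hXi.1 si hsi
    obtain ⟨yj, hyj⟩ := hXj.1 sj hsj
    have hyi' : yi ∈ projSet Ii X := by
      rw [← hXi.2.2]; exact ⟨si, hsi, hyi⟩
    have hyj' : yj ∈ projSet Ij X := by
      rw [← hXj.2.2]; exact ⟨sj, hsj, hyj⟩
    obtain ⟨x, hxP, hxi, hxj⟩ := exists_combine A X hX Ii Ij hdisj hyi' hyj'
    have hxR : x ∈ R := ⟨hxP, by rw [hxi]; exact hyi, by rw [hxj]; exact hyj⟩
    have hxs' : x ∈ s' := hss.1 hxR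
    have hti : si = t := by
      by_contra hne
      have hd := hXi.2.1 hsi ht hne
      have h1 : res Set.subset_union_left x ∈ t := hrt ⟨x, hxs', rfl⟩
      have h2 : res Set.subset_union_left x ∈ si := by rw [hxi]; exact hyi
      exact (hd.le_bot ⟨h2, h1⟩ : _)
    have htj : sj = t' := by
      by_contra hne
      have hd := hXj.2.1 hsj ht' hne
      have h1 : res Set.subset_union_right x ∈ t' := hrt' ⟨x, hxs', rfl⟩
      have h2 : res Set.subset_union_right x ∈ sj := by rw [hxj]; exact hyj
      exact (hd.le_bot ⟨h2, h1⟩ : _)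
    apply hss.2
    intro x' hx'
    exact ⟨hsub' hx', by rw [hti]; exact hrt ⟨x', hx', rfl⟩,
      by rw [htj]; exact hrt' ⟨x', hx', rfl⟩⟩
end

section
/- Assume X is nonempty. Then for every 1 ≤ k ≤ m, the iterated composition Y_k is a partition of π_{I_1 ∪ … ∪ I_k}(X). In particular, if I_1 ∪ … ∪ I_m = Fin n, then Y_m is a partition of X (up to the identification of functions Fin n → ℝ with their restrictions to the full index set Fin n). -/
/-- The union `I_0 ∪ … ∪ I_k` of the first `k+1` index sets. -/
def Un {n : ℕ} (I : ℕ → Set (Fin n)) : ℕ → Set (Fin n)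
  | 0 => I 0
  | k + 1 => Un I k ∪ I (k + 1)

/-- The iterated composition `Y_{k+1}`: `Y_1 = X_1` and `Y_{k+1} = Y_k ⋒ X_{k+1}`
(indexed from `0` here, so `Yiter X I XP k` is the paper's `Y_{k+1}`). -/
def Yiter {n : ℕ} (X : Set (Fin n → ℝ)) (I : ℕ → Set (Fin n))
    (XP : ∀ k, Set (Set (↥(I k) → ℝ))) : ∀ k, Set (Set (↥(Un I k) → ℝ))
  | 0 => XP 0
  | k + 1 => Comp X (Un I k) (I (k + 1)) (Yiter X I XP k) (XP (k + 1))

theorem subset_Un {n : ℕ} (I : ℕ → Set (Fin n)) : ∀ {i k : ℕ}, i ≤ k → I i ⊆ Un I k := by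
  intro i k
  induction k with
  | zero =>
    intro h
    have : i = 0 := Nat.le_zero.mp h
    subst this
    exact subset_of_eq rfl
  | succ k ih =>
    intro h
    rcases (by omega : i ≤ k ∨ i = k + 1) with h' | h'
    · exact (ih h').trans Set.subset_union_left
    · subst h'
      exact Set.subset_union_right

section Aux

variable {n : ℕ} {X : Set (Fin n → ℝ)} {Ii Ij : Set (Fin n)}
  {Si : Set (Set (↥Ii → ℝ))} {Sj : Set (Set (↥Ij → ℝ))}

/-- The candidate block determined by `t` and `t'`. -/
def blk (X : Set (Fin n → ℝ)) (Ii Ij : Set (Fin n))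
    (t : Set (↥Ii → ℝ)) (t' : Set (↥Ij → ℝ)) : Set (↥(Ii ∪ Ij) → ℝ) :=
  {f | f ∈ projSet (Ii ∪ Ij) X ∧ res Set.subset_union_left f ∈ t ∧
      res Set.subset_union_right f ∈ t'}

lemma res_proj_left (x : Fin n → ℝ) :
    res (Set.subset_union_left : Ii ⊆ Ii ∪ Ij) (proj (Ii ∪ Ij) x) = proj Ii x := rfl

lemma res_proj_right (x : Fin n → ℝ) :
    res (Set.subset_union_right : Ij ⊆ Ii ∪ Ij) (proj (Ii ∪ Ij) x) = proj Ij x := rfl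

lemma eq_of_partition {α : Type*} {𝒮 : Set (Set α)} {A : Set α}
    (hp : IsPartition 𝒮 A) {t u : Set α} (ht : t ∈ 𝒮) (hu : u ∈ 𝒮)
    {x : α} (hx : x ∈ t) (hx' : x ∈ u) : t = u := by
  by_contra h
  exact Set.disjoint_left.mp (hp.2.1 ht hu h) hx hx'

lemma blk_mem_C0 {t t'} (ht : t ∈ Si) (ht' : t' ∈ Sj) :
    blk X Ii Ij t t' ∈ C0 X Ii Ij Si Sj := by
  refine ⟨fun f hf => hf.1, ⟨t, ht, ?_⟩, ⟨t', ht', ?_⟩⟩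
  · rintro g ⟨f, hf, rfl⟩; exact hf.2.1
  · rintro g ⟨f, hf, rfl⟩; exact hf.2.2

lemma subset_blk_of_mem_C0 {s} (hs : s ∈ C0 X Ii Ij Si Sj) :
    ∃ t ∈ Si, ∃ t' ∈ Sj, s ⊆ blk X Ii Ij t t' := by
  obtain ⟨hsub, ⟨t, ht, hts⟩, ⟨t', ht', hts'⟩⟩ := hs
  exact ⟨t, ht, t', ht', fun f hf =>
    ⟨hsub hf, hts ⟨f, hf, rfl⟩, hts' ⟨f, hf, rfl⟩⟩⟩

/-- Membership in a block is determined by restriction, given partitions. -/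
lemma blk_unique (hi : IsPartition Si (projSet Ii X)) (hj : IsPartition Sj (projSet Ij X))
    {t u t' u'} (ht : t ∈ Si) (hu : u ∈ Si) (ht' : t' ∈ Sj) (hu' : u' ∈ Sj)
    {f : ↥(Ii ∪ Ij) → ℝ} (h1 : f ∈ blk X Ii Ij t t') (h2 : f ∈ blk X Ii Ij u u') :
    t = u ∧ t' = u' :=
  ⟨eq_of_partition hi ht hu h1.2.1 h2.2.1, eq_of_partition hj ht' hu' h1.2.2 h2.2.2⟩

/-- Every element of `π_{I∪J}(X)` lies in some block with parts from the partitions. -/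
lemma mem_blk (hi : IsPartition Si (projSet Ii X)) (hj : IsPartition Sj (projSet Ij X))
    {f : ↥(Ii ∪ Ij) → ℝ} (hf : f ∈ projSet (Ii ∪ Ij) X) :
    ∃ t ∈ Si, ∃ t' ∈ Sj, f ∈ blk X Ii Ij t t' := by
  obtain ⟨x, hx, rfl⟩ := hf
  have h1 : proj Ii x ∈ ⋃₀ Si := hi.2.2 ▸ ⟨x, hx, rfl⟩
  have h2 : proj Ij x ∈ ⋃₀ Sj := hj.2.2 ▸ ⟨x, hx, rfl⟩
  obtain ⟨t, ht, hmt⟩ := h1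
  obtain ⟨t', ht', hmt'⟩ := h2
  exact ⟨t, ht, t', ht', ⟨x, hx, rfl⟩, hmt, hmt'⟩

/-- Nonempty blocks are maximal, i.e. belong to the composition. -/
lemma blk_mem_comp (hi : IsPartition Si (projSet Ii X)) (hj : IsPartition Sj (projSet Ij X))
    {t t'} (ht : t ∈ Si) (ht' : t' ∈ Sj) (hne : (blk X Ii Ij t t').Nonempty) :
    blk X Ii Ij t t' ∈ Comp X Ii Ij Si Sj := by
  refine ⟨blk_mem_C0 ht ht', ?_⟩
  rintro ⟨s', hs', hss⟩
  obtain ⟨u, hu, u', hu', hsub⟩ := subset_blk_of_mem_C0 hs'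
  obtain ⟨f, hf⟩ := hne
  obtain ⟨rfl, rfl⟩ := blk_unique hi hj ht hu ht' hu' hf (hsub (hss.1 hf))
  exact hss.2 hsub

/-- Every element of the composition is a nonempty block. -/
lemma mem_comp_iff (hX : X.Nonempty)
    (hi : IsPartition Si (projSet Ii X)) (hj : IsPartition Sj (projSet Ij X)) {s} 
    (hs : s ∈ Comp X Ii Ij Si Sj) :
    ∃ t ∈ Si, ∃ t' ∈ Sj, s = blk X Ii Ij t t' ∧ s.Nonempty := by
  obtain ⟨hC0, hmax⟩ := hs
  obtain ⟨t, ht, t', ht', hsub⟩ := subset_blk_of_mem_C0 hC0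
  have hne : s.Nonempty := by
    rcases s.eq_empty_or_nonempty with rfl | h
    · obtain ⟨x, hx⟩ := hX
      have hfm : proj (Ii ∪ Ij) x ∈ projSet (Ii ∪ Ij) X := ⟨x, hx, rfl⟩
      obtain ⟨u, hu, u', hu', hfb⟩ := mem_blk hi hj hfm
      exact absurd ⟨blk X Ii Ij u u', blk_mem_C0 hu hu',
        Set.empty_ssubset.mpr ⟨_, hfb⟩⟩ hmax
    · exact h
  have heq : s = blk X Ii Ij t t' := by
    by_contra h
    exact hmax ⟨blk X Ii Ij t t', blk_mem_C0 ht ht', hsub.ssubset_of_ne h⟩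
  exact ⟨t, ht, t', ht', heq, hne⟩

/-- The composition of two partitions is a partition. -/
lemma comp_isPartition (hX : X.Nonempty)
    (hi : IsPartition Si (projSet Ii X)) (hj : IsPartition Sj (projSet Ij X)) :
    IsPartition (Comp X Ii Ij Si Sj) (projSet (Ii ∪ Ij) X) := by
  refine ⟨fun s hs => ?_, ?_, ?_⟩
  · obtain ⟨_, _, _, _, _, h⟩ := mem_comp_iff hX hi hj hs
    exact h
  · intro s hs s' hs' hne
    obtain ⟨t, ht, t', ht', rfl, -⟩ := mem_comp_iff hX hi hj hs
    obtain ⟨u, hu, u', hu', rfl, -⟩ := mem_comp_iff hX hi hj hs'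
    rw [Set.disjoint_left]
    intro f hf hf'
    obtain ⟨rfl, rfl⟩ := blk_unique hi hj ht hu ht' hu' hf hf'
    exact hne rfl
  · apply Set.Subset.antisymm
    · rintro f ⟨s, hs, hfs⟩
      exact hs.1.1 hfs
    · intro f hf
      obtain ⟨t, ht, t', ht', hfb⟩ := mem_blk hi hj hf
      exact ⟨blk X Ii Ij t t', blk_mem_comp hi hj ht ht' ⟨f, hfb⟩, hfb⟩

end Aux

/-- if `X` is nonempty then, for every `1 ≤ k ≤ m`, the iterated composition
`Y_k` is a partition of `π_{I_1 ∪ … ∪ I_k}(X)` (here `Yiter X I XP (k-1)`, `k-1 < m`);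
in particular, if `I_1 ∪ … ∪ I_m = Fin n`, then `Y_m` is a partition of `X` itself, up to
the identification of a state `x : Fin n → ℝ` with its restriction to the full index set
(formally: the preimages in `X` of the blocks of `Y_m` under this restriction partition `X`). -/
theorem Yiter_isPartition {n m : ℕ} (hm : 1 ≤ m)
    (X : Set (Fin n → ℝ)) (hX : X.Nonempty)
    (I : ℕ → Set (Fin n)) (XP : ∀ k, Set (Set (↥(I k) → ℝ)))
    (hXP : ∀ k < m, IsPartition (XP k) (projSet (I k) X)) :
    (∀ k < m, IsPartition (Yiter X I XP k) (projSet (Un I k) X)) ∧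
    (Un I (m - 1) = Set.univ →
      IsPartition ((fun s => X ∩ proj (Un I (m - 1)) ⁻¹' s) '' Yiter X I XP (m - 1)) X) := by
  have main : ∀ k < m, IsPartition (Yiter X I XP k) (projSet (Un I k) X) := by
    intro k
    induction k with
    | zero => intro hk; exact hXP 0 hk
    | succ k ih =>
      intro hk
      exact comp_isPartition hX (ih (by omega)) (hXP (k + 1) hk)
  refine ⟨main, fun _ => ?_⟩
  have hP := main (m - 1) (by omega)
  set U := Un I (m - 1)
  set Y := Yiter X I XP (m - 1)
  refine ⟨?_, ?_, ?_⟩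
  · rintro a ⟨s, hs, rfl⟩
    obtain ⟨f, hf⟩ := hP.1 s hs
    have : f ∈ projSet U X := hP.2.2 ▸ ⟨s, hs, hf⟩
    obtain ⟨x, hx, rfl⟩ := this
    exact ⟨x, hx, hf⟩
  · rintro a ⟨s, hs, rfl⟩ b ⟨t, ht, rfl⟩ hne
    have hst : s ≠ t := by rintro rfl; exact hne rfl
    have hd := hP.2.1 hs ht hst
    rw [Set.disjoint_left]
    rintro x ⟨hxX, hxs⟩ ⟨-, hxt⟩
    exact Set.disjoint_left.mp hd hxs hxt
  · apply Set.Subset.antisymm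
    · rintro x ⟨a, ⟨s, hs, rfl⟩, hxX, -⟩
      exact hxX
    · intro x hx
      have : proj U x ∈ ⋃₀ Y := hP.2.2 ▸ ⟨x, hx, rfl⟩
      obtain ⟨s, hs, hxs⟩ := this
      exact ⟨X ∩ proj U ⁻¹' s, ⟨s, hs, rfl⟩, hx, hxs⟩
end

section
/- Assume X is nonempty. Then for every element s of the iterated composition Y_m and every i ∈ {1, …, m}, there is exactly one block s_i ∈ X_i such that π_{I_i}(s) ⊆ s_i. (This makes the decomposition map d_i : Y_m → X_i well defined for each subsystem i.) -/
/-! The composition of two partitions is again a partition: its blocks are exactly the nonempty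
"cells" `{y | π_I y ∈ t ∧ π_{I'} y ∈ t'}` with `t`, `t'` blocks of the two factors, since any
element of `C₀` lies in the cell of its blocks and a cell is maximal as soon as it is nonempty.
By induction every `Y_k` is a partition; its blocks are nonempty and lie over blocks of each `X_i`,
and disjointness of the blocks of `X_i` gives uniqueness. -/

lemma resSet_resSet {d : ℕ} {I K L : Set (Fin d)} (h₁ : I ⊆ K) (h₂ : K ⊆ L)
    (S : Set (↥L → ℝ)) : resSet h₁ (resSet h₂ S) = resSet (h₁.trans h₂) S := by
  simp only [resSet, ← Set.image_comp]
  rfl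

lemma res_mem_projSet {d : ℕ} {I K : Set (Fin d)} (h : I ⊆ K) {X : Set (Fin d → ℝ)}
    {p : ↥K → ℝ} (hp : p ∈ projSet K X) : res h p ∈ projSet I X := by
  obtain ⟨x, hx, rfl⟩ := hp
  exact ⟨x, hx, rfl⟩

lemma IsPartition.pairwiseDisjoint {α : Type*} {𝒮 : Set (Set α)} {A : Set α}
    (h𝒮 : IsPartition 𝒮 A) : 𝒮.PairwiseDisjoint id :=
  h𝒮.2.1

lemma IsPartition.exists_mem {α : Type*} {𝒮 : Set (Set α)} {A : Set α}
    (h𝒮 : IsPartition 𝒮 A) {a : α} (ha : a ∈ A) : ∃ t ∈ 𝒮, a ∈ t := by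
  rwa [← h𝒮.2.2, Set.mem_sUnion] at ha

section Composition

variable {n : ℕ} (X : Set (Fin n → ℝ)) {Ii Ij : Set (Fin n)}
  {Xi : Set (Set (↥Ii → ℝ))} {Xj : Set (Set (↥Ij → ℝ))}

def cell (t : Set (↥Ii → ℝ)) (t' : Set (↥Ij → ℝ)) : Set (↥(Ii ∪ Ij) → ℝ) :=
  projSet (Ii ∪ Ij) X ∩ res Set.subset_union_left ⁻¹' t ∩ res Set.subset_union_right ⁻¹' t'

variable {X}

lemma cell_mem_C0 {t t'} (ht : t ∈ Xi) (ht' : t' ∈ Xj) : cell X t t' ∈ C0 X Ii Ij Xi Xj :=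
  ⟨fun _ hy => hy.1.1,
    ⟨t, ht, Set.image_subset_iff.mpr fun _ hy => hy.1.2⟩,
    ⟨t', ht', Set.image_subset_iff.mpr fun _ hy => hy.2⟩⟩

lemma exists_subset_cell_of_mem_C0 {s} (hs : s ∈ C0 X Ii Ij Xi Xj) :
    ∃ t ∈ Xi, ∃ t' ∈ Xj, s ⊆ cell X t t' := by
  obtain ⟨hsX, ⟨t, ht, hst⟩, ⟨t', ht', hst'⟩⟩ := hs
  exact ⟨t, ht, t', ht', fun y hy => ⟨⟨hsX hy, hst ⟨y, hy, rfl⟩⟩, hst' ⟨y, hy, rfl⟩⟩⟩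

lemma subset_cell_of_mem_C0 (hXi : Xi.PairwiseDisjoint id) (hXj : Xj.PairwiseDisjoint id)
    {s t t' p} (hs : s ∈ C0 X Ii Ij Xi Xj)
    (ht : t ∈ Xi) (ht' : t' ∈ Xj) (hps : p ∈ s) (hpc : p ∈ cell X t t') : s ⊆ cell X t t' := by
  obtain ⟨u, hu, u', hu', hsu⟩ := exists_subset_cell_of_mem_C0 hs
  have hpu := hsu hps
  obtain rfl : u = t := hXi.elim_set hu ht _ hpu.1.2 hpc.1.2
  obtain rfl : u' = t' := hXj.elim_set hu' ht' _ hpu.2 hpc.2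
  exact hsu

lemma eq_of_mem_Comp_of_subset {s s'} (hs : s ∈ Comp X Ii Ij Xi Xj)
    (hs' : s' ∈ C0 X Ii Ij Xi Xj) (hss' : s ⊆ s') : s = s' := by
  by_contra hne
  exact hs.2 ⟨s', hs', hss'.ssubset_of_ne hne⟩

lemma cell_mem_Comp (hXi : Xi.PairwiseDisjoint id) (hXj : Xj.PairwiseDisjoint id) {t t'}
    (ht : t ∈ Xi) (ht' : t' ∈ Xj) (hne : (cell X t t').Nonempty) :
    cell X t t' ∈ Comp X Ii Ij Xi Xj := by
  obtain ⟨p, hp⟩ := hne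
  refine ⟨cell_mem_C0 ht ht', fun ⟨s', hs', hlt⟩ => hlt.not_subset ?_⟩
  exact subset_cell_of_mem_C0 hXi hXj hs' ht ht' (hlt.subset hp) hp

lemma exists_mem_Comp (hXi : IsPartition Xi (projSet Ii X)) (hXj : IsPartition Xj (projSet Ij X))
    {p} (hp : p ∈ projSet (Ii ∪ Ij) X) : ∃ s ∈ Comp X Ii Ij Xi Xj, p ∈ s := by
  obtain ⟨t, ht, hpt⟩ := hXi.exists_mem (res_mem_projSet Set.subset_union_left hp)
  obtain ⟨t', ht', hpt'⟩ := hXj.exists_mem (res_mem_projSet Set.subset_union_right hp)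
  have hpc : p ∈ cell X t t' := ⟨⟨hp, hpt⟩, hpt'⟩
  exact ⟨_, cell_mem_Comp hXi.pairwiseDisjoint hXj.pairwiseDisjoint ht ht' ⟨p, hpc⟩, hpc⟩

theorem IsPartition.Comp (hXi : IsPartition Xi (projSet Ii X))
    (hXj : IsPartition Xj (projSet Ij X)) :
    IsPartition (Comp X Ii Ij Xi Xj) (projSet (Ii ∪ Ij) X) := by
  refine ⟨fun s hs => ?_, fun s₁ hs₁ s₂ hs₂ hne => ?_, ?_⟩
  · obtain ⟨t, ht, -⟩ := hs.1.2.1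
    obtain ⟨q, hq⟩ := hXi.1 t ht
    obtain ⟨x, hx, -⟩ : q ∈ projSet Ii X := hXi.2.2 ▸ Set.mem_sUnion_of_mem hq ht
    obtain ⟨s', hs', hxs'⟩ := exists_mem_Comp hXi hXj ⟨x, hx, rfl⟩
    rw [Set.nonempty_iff_ne_empty]
    rintro rfl
    rw [← eq_of_mem_Comp_of_subset hs hs'.1 (Set.empty_subset s')] at hxs'
    exact hxs'
  · replace hXi := hXi.pairwiseDisjoint
    replace hXj := hXj.pairwiseDisjoint
    refine Set.disjoint_left.mpr fun p hp₁ hp₂ => hne ?_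
    obtain ⟨t, ht, t', ht', hs₁t⟩ := exists_subset_cell_of_mem_C0 hs₁.1
    have hcell := eq_of_mem_Comp_of_subset hs₁ (cell_mem_C0 ht ht') hs₁t
    rw [hcell] at hp₁ ⊢
    exact (eq_of_mem_Comp_of_subset hs₂ (cell_mem_C0 ht ht')
      (subset_cell_of_mem_C0 hXi hXj hs₂.1 ht ht' hp₂ hp₁)).symm
  · refine Set.Subset.antisymm (Set.sUnion_subset fun s hs => hs.1.1) fun p hp => ?_
    obtain ⟨s, hs, hps⟩ := exists_mem_Comp hXi hXj hp
    exact Set.mem_sUnion_of_mem hps hs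

end Composition

section Iteration

variable {n : ℕ} {X : Set (Fin n → ℝ)} {I : ℕ → Set (Fin n)}
  {XP : ∀ k, Set (Set (↥(I k) → ℝ))}

theorem isPartition_Yiter {k : ℕ} (hXP : ∀ j ≤ k, IsPartition (XP j) (projSet (I j) X)) :
    IsPartition (Yiter X I XP k) (projSet (Un I k) X) := by
  induction k with
  | zero => exact hXP 0 le_rfl
  | succ k ih =>
    exact (ih fun j hj => hXP j (hj.trans k.le_succ)).Comp (hXP (k + 1) le_rfl)

lemma exists_block_of_mem_Yiter {k : ℕ} {s} (hs : s ∈ Yiter X I XP k) {i : ℕ} (hi : i ≤ k) :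
    ∃ t ∈ XP i, resSet (subset_Un I hi) s ⊆ t := by
  induction k generalizing i with
  | zero =>
    obtain rfl := Nat.le_zero.mp hi
    exact ⟨s, hs, Set.image_subset_iff.mpr fun _ hy => hy⟩
  | succ k ih =>
    obtain ⟨-, ⟨u, hu, hsu⟩, ⟨t', ht', hst'⟩⟩ := hs.1
    rcases hi.lt_or_eq with hik | rfl
    · have hik : i ≤ k := Nat.lt_succ_iff.mp hik
      obtain ⟨t, ht, hut⟩ := ih hu hik
      refine ⟨t, ht, ?_⟩
      calc resSet (subset_Un I hi) s
          = resSet (subset_Un I hik) (resSet Set.subset_union_left s) := (resSet_resSet _ _ s).symm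
        _ ⊆ resSet (subset_Un I hik) u := Set.image_mono hsu
        _ ⊆ t := hut
    · exact ⟨t', ht', hst'⟩

end Iteration

/-- if `X` is nonempty then every element `s` of the iterated composition
`Y_m` (here `Yiter X I XP (m-1)`) projects, for each subsystem `i < m`, inside exactly
one block `si ∈ X_i`; hence the decomposition maps `d_i : Y_m → X_i` are well defined. -/
theorem Yiter_unique_blocks {n m : ℕ}
    (X : Set (Fin n → ℝ))
    (I : ℕ → Set (Fin n)) (XP : ∀ k, Set (Set (↥(I k) → ℝ)))
    (hXP : ∀ k < m, IsPartition (XP k) (projSet (I k) X))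
    (s : Set (↥(Un I (m - 1)) → ℝ)) (hs : s ∈ Yiter X I XP (m - 1)) :
    ∀ i (hi : i < m),
      ∃! si, si ∈ XP i ∧ resSet (subset_Un I (by omega : i ≤ m - 1)) s ⊆ si := by
  intro i hi
  obtain ⟨t, ht, hst⟩ := exists_block_of_mem_Yiter hs (by omega : i ≤ m - 1)
  obtain ⟨p, hp⟩ := (isPartition_Yiter fun j hj => hXP j (by omega)).1 s hs
  refine ⟨t, ⟨ht, hst⟩, fun t' ⟨ht', hst'⟩ => ?_⟩
  exact (hXP i hi).pairwiseDisjoint.elim_set ht' ht _ (hst' ⟨p, hp, rfl⟩)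
    (hst ⟨p, hp, rfl⟩)
end

section
/- (Valid-set invariance of the composed abstraction.) For every 0 ≤ k < r, every s ∈ X_c with d_i(s) ∈ V_i^k for all i, and every s' ∈ Post_c(k, s), it holds that d_i(s') ∈ V_i^{k+1} for all i. (Every abstract successor of a symbol whose decompositions are all valid at step k has decompositions that are all valid at step k+1.) -/
/-- Successors of state `x` under control `u`: `Post(x, u) = {F x u w | w ∈ 𝒲}`. -/
def Post {n p q : ℕ} (F : (Fin n → ℝ) → (Fin p → ℝ) → (Fin q → ℝ) → (Fin n → ℝ))
    (W : Set (Fin q → ℝ)) (x : Fin n → ℝ) (u : Fin p → ℝ) : Set (Fin n → ℝ) :=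
  { y | ∃ w ∈ W, y = F x u w }

/-- Reachable set `RS(X₀, U') = {F x u w | x ∈ X₀, u ∈ U', w ∈ 𝒲}`. -/
def RS {n p q : ℕ} (F : (Fin n → ℝ) → (Fin p → ℝ) → (Fin q → ℝ) → (Fin n → ℝ))
    (W : Set (Fin q → ℝ)) (X0 : Set (Fin n → ℝ)) (U' : Set (Fin p → ℝ)) :
    Set (Fin n → ℝ) :=
  { y | ∃ x ∈ X0, ∃ u ∈ U', ∃ w ∈ W, y = F x u w }

/-- First assume-guarantee over-approximation
`RS_i^{AG1}(k, sᵢ, uᵢ) = R̄(σᵏ ∩ π_{Iᵢ}⁻¹(sᵢ), 𝒰 ∩ π_{Jᵢ}⁻¹({uᵢ}))`. -/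
def RSag1 {n p : ℕ} (Rb : Set (Fin n → ℝ) → Set (Fin p → ℝ) → Set (Fin n → ℝ))
    (U : Set (Fin p → ℝ)) (σ : ℕ → Set (Fin n → ℝ))
    (Ii : Set (Fin n)) (Ji : Set (Fin p)) (k : ℕ)
    (si : Set (↥Ii → ℝ)) (ui : ↥Ji → ℝ) : Set (Fin n → ℝ) :=
  Rb (σ k ∩ proj Ii ⁻¹' si) (U ∩ proj Ji ⁻¹' {ui})

/-- Second assume-guarantee over-approximation
`RS_i^{AG2}(k, sᵢ, uᵢ) = RS_i^{AG1}(k, sᵢ, uᵢ) ∩ {x | π_{Iᵢᵒ}(x) ∈ π_{Iᵢᵒ}(σ^{k+1})}`. -/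
def RSag2 {n p : ℕ} (Rb : Set (Fin n → ℝ) → Set (Fin p → ℝ) → Set (Fin n → ℝ))
    (U : Set (Fin p → ℝ)) (σ : ℕ → Set (Fin n → ℝ))
    (Ii Io : Set (Fin n)) (Ji : Set (Fin p)) (k : ℕ)
    (si : Set (↥Ii → ℝ)) (ui : ↥Ji → ℝ) : Set (Fin n → ℝ) :=
  RSag1 Rb U σ Ii Ji k si ui ∩ { x | proj Io x ∈ projSet Io (σ (k + 1)) }

/-- valid-set invariance of the composed abstraction: for every `k < r`,
every `s ∈ X_c` with `dᵢ(s) ∈ Vᵢᵏ` for all `i`, and every abstract successor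
`s' ∈ Post_c(k, s)`, one has `dᵢ(s') ∈ Vᵢ^{k+1}` for all `i`. -/
theorem valid_set_invariance {n p q m r : ℕ} (hm : 1 ≤ m) (hr : 1 ≤ r)
    (W : Set (Fin q → ℝ))
    (F : (Fin n → ℝ) → (Fin p → ℝ) → (Fin q → ℝ) → (Fin n → ℝ))
    (U : Set (Fin p → ℝ))
    (Rb : Set (Fin n → ℝ) → Set (Fin p → ℝ) → Set (Fin n → ℝ))
    (hRb : ∀ X0 U', RS F W X0 U' ⊆ Rb X0 U')
    (Ic Ii : Fin m → Set (Fin n)) (J : Fin m → Set (Fin p))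
    (hIcdisj : ∀ i j, i ≠ j → Disjoint (Ic i) (Ic j)) (hIcU : ⋃ i, Ic i = Set.univ)
    (hIcIi : ∀ i, Ic i ⊆ Ii i)
    (hJdisj : ∀ i j, i ≠ j → Disjoint (J i) (J j)) (hJU : ⋃ i, J i = Set.univ)
    (hUdec : ∀ u, u ∈ U ↔ ∀ i, proj (J i) u ∈ projSet (J i) U)
    (X : Set (Fin n → ℝ)) (σ : ℕ → Set (Fin n → ℝ))
    (hσne : ∀ k ≤ r, (σ k).Nonempty) (hσX : ∀ k ≤ r, σ k ⊆ X)
    (hσbox : ∀ k ≤ r, ∃ A : Fin n → Set ℝ, σ k = Set.univ.pi A)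
    (XP : (i : Fin m) → Set (Set (↥(Ii i) → ℝ)))
    (hXP : ∀ i, IsPartition (XP i) (projSet (Ii i) X))
    (V : (i : Fin m) → ℕ → Set (Set (↥(Ii i) → ℝ)))
    (hV : ∀ i, ∀ k ≤ r, ∀ si ∈ V i k, si ∈ XP i ∧ si ⊆ projSet (Ii i) (σ k))
    (C : (i : Fin m) → ℕ → Set (↥(Ii i) → ℝ) → (↥(J i) → ℝ))
    (hC : ∀ i, ∀ k < r, ∀ si ∈ V i k,
      C i k si ∈ projSet (J i) U ∧
      (projSet (Ii i) (RSag2 Rb U σ (Ii i) (Ii i \ Ic i) (J i) k si (C i k si))).Nonempty ∧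
      projSet (Ii i) (RSag2 Rb U σ (Ii i) (Ii i \ Ic i) (J i) k si (C i k si)) ⊆
        ⋃₀ V i (k + 1))
    (Xc : Set (Set (Fin n → ℝ))) (hXcPart : IsPartition Xc X)
    (d : (i : Fin m) → Set (Fin n → ℝ) → Set (↥(Ii i) → ℝ))
    (hd : ∀ s ∈ Xc, ∀ i, d i s ∈ XP i ∧ projSet (Ii i) s ⊆ d i s)
    (H : (Fin n → ℝ) → Set (Fin n → ℝ))
    (hH : ∀ x ∈ X, H x ∈ Xc ∧ x ∈ H x)
    (k : ℕ) (hk : k < r) (s : Set (Fin n → ℝ)) (hs : s ∈ Xc)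
    (hsV : ∀ i, d i s ∈ V i k)
    (s' : Set (Fin n → ℝ)) (hs' : s' ∈ Xc)
    (hpost : ∀ i, (d i s' ∩ projSet (Ii i)
      (RSag2 Rb U σ (Ii i) (Ii i \ Ic i) (J i) k (d i s) (C i k (d i s)))).Nonempty) :
    ∀ i, d i s' ∈ V i (k + 1) := by
  intro i
  obtain ⟨y, hy1, hy2⟩ := hpost i
  have hsub := (hC i k hk (d i s) (hsV i)).2.2
  obtain ⟨t, ht, hyt⟩ := hsub hy2
  have htXP := (hV i (k + 1) (by omega) t ht).1
  have hdXP := (hd s' hs' i).1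
  have heq : d i s' = t := by
    by_contra hne
    exact Set.disjoint_left.mp ((hXP i).2.1 hdXP htXP hne) hy1 hyt
  rw [heq]; exact ht
end
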